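/- arXiv:math/0410152 — 3 statements merged into one kernel-verified Lean document; each statement's English description precedes it below -/
import Mathlib

section
/- For all real x ∈ [0, R] and s ≥ 0, e^{sx} - 1 ≤ s x + ((e^{sR} - 1 - sR)/R²) x². -/
lemma exp_series_tail (w : ℝ) :
    Real.exp w - 1 - w = ∑' n : ℕ, w ^ (n + 2) / ((Nat.factorial (n + 2) : ℕ) : ℝ) := by
  have hs := Real.summable_pow_div_factorial w
  have h := Summable.sum_add_tsum_nat_add (f := fun n : ℕ => w ^ n / ((Nat.factorial n : ℕ) : ℝ)) 2 hs
  have hexp : Real.exp w = ∑' n : ℕ, w ^ n / ((Nat.factorial n : ℕ) : ℝ) := by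
    rw [Real.exp_eq_exp_ℝ, NormedSpace.exp_eq_tsum_div]
  rw [← h] at hexp
  simp [Finset.sum_range_succ] at hexp
  linarith [hexp]

lemma key_ineq (u v : ℝ) (hu : 0 ≤ u) (huv : u ≤ v) :
    v ^ 2 * (Real.exp u - 1 - u) ≤ u ^ 2 * (Real.exp v - 1 - v) := by
  rw [exp_series_tail u, exp_series_tail v, ← tsum_mul_left, ← tsum_mul_left]
  apply Summable.tsum_le_tsum
  · intro n
    have h1 : u ^ n ≤ v ^ n := pow_le_pow_left₀ hu huv n
    have hfac : (0:ℝ) < ((Nat.factorial (n + 2) : ℕ) : ℝ) := by positivity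
    rw [div_eq_mul_inv, div_eq_mul_inv, ← mul_assoc, ← mul_assoc]
    apply mul_le_mul_of_nonneg_right _ (by positivity)
    have : v ^ 2 * u ^ (n + 2) = (u ^ 2 * v ^ 2) * u ^ n := by ring
    rw [this]
    have : u ^ 2 * v ^ (n + 2) = (u ^ 2 * v ^ 2) * v ^ n := by ring
    rw [this]
    exact mul_le_mul_of_nonneg_left h1 (by positivity)
  · exact ((Real.summable_pow_div_factorial u).comp_injective
      (add_left_injective 2)).mul_left _
  · exact ((Real.summable_pow_div_factorial v).comp_injective
      (add_left_injective 2)).mul_left _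

/-- Quadratic upper bound for e^{sx} - 1 on [0, R]. -/
theorem exp_sub_one_le_quadratic (R : ℝ) (hR : 0 < R) :
    ∀ x ∈ Set.Icc (0 : ℝ) R, ∀ s : ℝ, 0 ≤ s →
      Real.exp (s * x) - 1 ≤ s * x + ((Real.exp (s * R) - 1 - s * R) / R ^ 2) * x ^ 2 := by
  intro x hx s hs
  obtain ⟨hx0, hxR⟩ := hx
  rcases eq_or_lt_of_le hs with rfl | hs'
  · simp
  · have hu : 0 ≤ s * x := by positivity
    have huv : s * x ≤ s * R := by nlinarith
    have h := key_ineq (s * x) (s * R) hu huv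
    have h2 : R ^ 2 * (Real.exp (s * x) - 1 - s * x) ≤ x ^ 2 * (Real.exp (s * R) - 1 - s * R) := by
      have hs2 : 0 < s ^ 2 := by positivity
      nlinarith [h]
    have hR2 : 0 < R ^ 2 := by positivity
    have h3 : Real.exp (s * x) - 1 - s * x ≤
        x ^ 2 * (Real.exp (s * R) - 1 - s * R) / R ^ 2 := by
      rw [le_div_iff₀ hR2]
      nlinarith [h2]
    have h4 : (Real.exp (s * R) - 1 - s * R) / R ^ 2 * x ^ 2 =
        x ^ 2 * (Real.exp (s * R) - 1 - s * R) / R ^ 2 := by ring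
    linarith [h3, h4.ge]
end

section
/- Let M ≥ 2 and R > 0, and let s₀ > 0 be the unique solution of (e^{s₀R} - 1)/(s₀R) = M. Then (log M)/R ≤ s₀ ≤ 2(log M)/R. -/
open Real in
private lemma exp_slope_lt {a b : ℝ} (ha : 0 < a) (hab : a < b) :
    (Real.exp a - 1) / a < (Real.exp b - 1) / b := by
  have h := strictConvexOn_exp.secant_strict_mono (a := 0) (x := a) (y := b)
    (Set.mem_univ _) (Set.mem_univ _) (Set.mem_univ _) (ne_of_gt ha)
    (ne_of_gt (ha.trans hab)) hab
  simpa [Real.exp_zero] using h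

/-- If M ≥ 2 and s₀ > 0 solves (e^{s₀R}-1)/(s₀R) = M, then log M / R ≤ s₀ ≤ 2 log M / R. -/
theorem s0_two_sided_bounds (M R s₀ : ℝ) (hM : 2 ≤ M) (hR : 0 < R) (hs₀ : 0 < s₀)
    (hsol : (Real.exp (s₀ * R) - 1) / (s₀ * R) = M) :
    Real.log M / R ≤ s₀ ∧ s₀ ≤ 2 * Real.log M / R := by
  have hMpos : (0:ℝ) < M := by linarith
  have hL : 0 < Real.log M := Real.log_pos (by linarith)
  set x := s₀ * R with hx
  have hxpos : 0 < x := mul_pos hs₀ hR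
  set L := Real.log M with hLdef
  have hexpL : Real.exp L = M := Real.exp_log hMpos
  constructor
  · -- lower bound: x ≥ L
    rw [div_le_iff₀ hR, ← hx]
    by_contra h
    push_neg at h
    have hslope := exp_slope_lt hxpos h
    rw [hsol, hexpL] at hslope
    -- M < (M-1)/L, but (M-1)/L ≤ M since M-1 ≤ M*L (log M ≥ 1 - 1/M)
    have hlog : 1 - 1/M ≤ L := by
      have := Real.add_one_le_exp (-L)
      rw [Real.exp_neg, hexpL] at this
      have h1M : M * M⁻¹ = 1 := mul_inv_cancel₀ (ne_of_gt hMpos)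
      rw [one_div]
      nlinarith
    have : M - 1 ≤ M * L := by
      have := mul_le_mul_of_nonneg_left hlog (le_of_lt hMpos)
      have hM1 : M * (1/M) = 1 := by field_simp
      nlinarith
    rw [lt_div_iff₀ hL] at hslope
    nlinarith
  · -- upper bound: x ≤ 2L
    rw [le_div_iff₀ hR, ← hx]
    by_contra h
    push_neg at h
    have h2L : 0 < 2 * L := by linarith
    have hslope := exp_slope_lt h2L h
    rw [hsol] at hslope
    have hexp2L : Real.exp (2 * L) = M ^ 2 := by
      rw [two_mul, Real.exp_add, hexpL, sq]
    rw [hexp2L] at hslope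
    -- (M^2 - 1)/(2L) ≥ M since M^2 - 1 ≥ 2 M L, i.e. sinh L ≥ L
    have hsinh : L ≤ Real.sinh L := Real.self_le_sinh_iff.mpr hL.le
    have : 2 * (M * L) ≤ M ^ 2 - 1 := by
      have hs : Real.sinh L = (Real.exp L - Real.exp (-L)) / 2 := Real.sinh_eq L
      rw [hs, Real.exp_neg, hexpL] at hsinh
      have : M * L ≤ M * ((M - M⁻¹)/2) := mul_le_mul_of_nonneg_left hsinh hMpos.le
      have hMi : M * M⁻¹ = 1 := mul_inv_cancel₀ (ne_of_gt hMpos)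
      nlinarith
    rw [div_lt_iff₀ h2L] at hslope
    nlinarith
end

section
/- Let W be a real random variable with median m, and suppose Y is another real random variable with P(W ≠ Y) ≤ δ < 1/2. If H is a strictly decreasing positive function with P(Y - m(Y) ≤ -t) ≤ H(t) for all t > 0, where m(Y) is a median of Y and m(Y) > m, then m(Y) - m ≤ I(1/2 - δ), where I(y) = sup{z ≥ 0 : H(z) ≥ y}. -/
open MeasureTheory

/-- Median stability under coupling: if P(W ≠ Y) ≤ δ < 1/2, m is a median of W,
m(Y) > m is a median of Y, and H is a strictly decreasing positive left-tail bound for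
Y - m(Y), then m(Y) - m ≤ I(1/2 - δ) where I(y) = sup{z ≥ 0 : H(z) ≥ y}. -/
theorem median_stability {Ω : Type*} [MeasurableSpace Ω] (ℙ : Measure Ω)
    [IsProbabilityMeasure ℙ] (W Y : Ω → ℝ) (m mY δ : ℝ) (hδ0 : 0 ≤ δ) (hδ : δ < 1 / 2)
    (hmW : 1 / 2 ≤ (ℙ {ω | W ω ≤ m}).toReal ∧ 1 / 2 ≤ (ℙ {ω | m ≤ W ω}).toReal)
    (hmY : 1 / 2 ≤ (ℙ {ω | Y ω ≤ mY}).toReal ∧ 1 / 2 ≤ (ℙ {ω | mY ≤ Y ω}).toReal)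
    (hcouple : (ℙ {ω | W ω ≠ Y ω}).toReal ≤ δ)
    (H : ℝ → ℝ) (hHanti : StrictAnti H) (hHpos : ∀ t, 0 < H t)
    (hHt : ∀ t : ℝ, 0 < t → (ℙ {ω | Y ω - mY ≤ -t}).toReal ≤ H t)
    (hlt : m < mY)
    (I : ℝ) (hI : IsLUB {z : ℝ | 0 ≤ z ∧ 1 / 2 - δ ≤ H z} I) :
    mY - m ≤ I := by
  set t := mY - m with ht
  have ht0 : 0 < t := sub_pos.mpr hlt
  -- The event {Y ≤ m} equals {Y - mY ≤ -t}
  have hset : {ω | Y ω - mY ≤ -t} = {ω | Y ω ≤ m} := by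
    ext ω; simp only [Set.mem_setOf_eq, ht]; constructor <;> intro h <;> linarith
  -- {W ≤ m} ⊆ {Y ≤ m} ∪ {W ≠ Y}
  have hsub : {ω | W ω ≤ m} ⊆ {ω | Y ω ≤ m} ∪ {ω | W ω ≠ Y ω} := by
    intro ω hω
    by_cases h : W ω = Y ω
    · left; simpa [← h] using hω
    · right; exact h
  have hfin1 : ℙ {ω | Y ω ≤ m} ≠ ⊤ := measure_ne_top _ _
  have hfin2 : ℙ {ω | W ω ≠ Y ω} ≠ ⊤ := measure_ne_top _ _
  have hle : (ℙ {ω | W ω ≤ m}).toReal ≤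
      (ℙ {ω | Y ω ≤ m}).toReal + (ℙ {ω | W ω ≠ Y ω}).toReal := by
    rw [← ENNReal.toReal_add hfin1 hfin2]
    exact ENNReal.toReal_mono (by simp [hfin1, hfin2])
      ((measure_mono hsub).trans (measure_union_le _ _))
  have hkey : 1 / 2 - δ ≤ H t := by
    have h1 : 1 / 2 - δ ≤ (ℙ {ω | Y ω ≤ m}).toReal := by
      have := hmW.1; linarith
    have h2 := hHt t ht0
    rw [hset] at h2
    linarith
  exact hI.1 ⟨le_of_lt ht0, hkey⟩
end
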